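/- The smallest area of a convex G₄-covering of all unit segments is 1/2: (i) the isosceles right triangle with legs of length 1, realized as the convex hull of {0, 1, i}, is a G₄-covering of all unit segments; and (ii) every convex set K ⊆ ℂ that is a G₄-covering of all unit segments has area (planar Lebesgue measure) at least 1/2. -/

import Mathlib

/-!
If a convex set contains the segments `[a, a + u]` and `[b, b + v]`, it contains the triangles
`a, a + u, b` and `a, a + u, b + v`. When `b` and `b + v` lie on opposite sides of the line
through `a` and `a + u`, these triangles do not overlap and their areas add up to `|ω u v| / 2`
(`ω` the area form); otherwise the larger of the two already has that area.

A G₄-covering contains, for every angle `θ`, a unit segment of direction `θ` or `θ + π / 2`.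
Run through the angles `k π / (2 m)`, `k = 0, …, m`. Either availability agrees at the two ends,
which gives two perpendicular unit segments, or it changes between two neighbouring angles,
which gives two unit segments at angle `π / 2 ± π / (2 m)`. So the area is at least
`cos (π / (2 m)) / 2` for every `m`, hence at least `1 / 2`.

Conversely, some rotation `i ^ j u` of a unit vector `u` points into the closed second quadrant,
and then it joins a point of `[0, 1]` to a point of `[0, i]`, inside the triangle `0, 1, i`.
-/

open Set MeasureTheory

/-- K is a G₄-covering of all unit segments: every unit segment fits in K after a
rotation by a multiple of π/2 and a translation. -/
def IsG4SegCover (K : Set ℂ) : Prop :=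
  ∀ u : ℂ, ‖u‖ = 1 → ∃ j : Fin 4, ∃ v : ℂ,
    segment ℝ v (v + Complex.I ^ (j : ℕ) * u) ⊆ K

open Pointwise Real

namespace G4Cover

attribute [local instance] Complex.finrank_real_complex_fact

local notation "ω" => Complex.orientation.areaForm

theorem det_basisOneI_constr (u v : ℂ) :
    LinearMap.det (Complex.basisOneI.constr ℝ ![u, v]) = ω u v := by
  rw [← LinearMap.det_toMatrix Complex.basisOneI, Matrix.det_fin_two, Complex.areaForm]
  simp [LinearMap.toMatrix_apply]
  ring

theorem mem_convexHull_zero_one_I {z : ℂ} (hre : 0 ≤ z.re) (him : 0 ≤ z.im)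
    (hsum : z.re + z.im ≤ 1) : z ∈ convexHull ℝ {0, 1, Complex.I} := by
  have hmem := (convex_convexHull ℝ {0, 1, Complex.I}).sum_mem (t := Finset.univ)
    (w := ![1 - z.re - z.im, z.re, z.im]) (z := ![0, 1, Complex.I])
    (by intro i _; fin_cases i; exacts [show 0 ≤ 1 - z.re - z.im by linarith, hre, him])
    (by simp [Fin.sum_univ_three]; ring)
    (by intro i _; apply subset_convexHull; fin_cases i <;> simp)
  convert hmem using 1
  simp [Fin.sum_univ_three]

theorem volume_preimage_Icc_prod_Icc :
    volume (Complex.measurableEquivRealProd ⁻¹' (Icc (0 : ℝ) 1 ×ˢ Icc (0 : ℝ) 1)) = 1 := by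
  rw [Complex.volume_preserving_equiv_real_prod.measure_preimage
    (measurableSet_Icc.prod measurableSet_Icc).nullMeasurableSet, Measure.volume_eq_prod,
    Measure.prod_prod, Real.volume_Icc, sub_zero, ENNReal.ofReal_one, one_mul]

theorem volume_setOf_areaForm_eq {u : ℂ} (hu : u ≠ 0) (a : ℂ) :
    volume {z | ω u z = ω u a} = 0 := by
  have hline : {z | ω u z = ω u a} = AffineSubspace.mk' a (LinearMap.ker (ω u)) := by
    ext z
    simp only [mem_ofPred_eq, SetLike.mem_coe, AffineSubspace.mem_mk', vsub_eq_sub,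
      LinearMap.mem_ker, map_sub, sub_eq_zero]
  rw [hline]
  refine Measure.addHaar_affineSubspace _ _ fun htop => hu ?_
  have hker := congrArg AffineSubspace.direction htop
  rw [AffineSubspace.direction_mk', AffineSubspace.direction_top, LinearMap.ker_eq_top] at hker
  have := LinearMap.congr_fun hker (Complex.orientation.rightAngleRotation u)
  rw [Orientation.areaForm_rightAngleRotation_right, real_inner_self_eq_norm_sq,
    LinearMap.zero_apply] at this
  simpa using this

theorem half_le_volume_convexHull_zero_one_I :
    ENNReal.ofReal (1 / 2) ≤ volume (convexHull ℝ {0, 1, Complex.I}) := by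
  set T := convexHull ℝ {(0 : ℂ), 1, Complex.I}
  have hsquare : Complex.measurableEquivRealProd ⁻¹' (Icc (0 : ℝ) 1 ×ˢ Icc (0 : ℝ) 1)
      ⊆ T ∪ (fun z => 1 + Complex.I - z) ⁻¹' T := by
    rintro z ⟨⟨hre₀, hre₁⟩, him₀, him₁⟩
    simp only [Complex.measurableEquivRealProd_apply] at hre₀ hre₁ him₀ him₁
    rcases le_total (z.re + z.im) 1 with hsum | hsum
    · exact Or.inl (mem_convexHull_zero_one_I hre₀ him₀ hsum)
    · have hre : (1 + Complex.I - z).re = 1 - z.re := by simp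
      have him : (1 + Complex.I - z).im = 1 - z.im := by simp
      refine Or.inr (mem_convexHull_zero_one_I ?_ ?_ ?_) <;> simp only [hre, him] <;> linarith
  have hreflect : volume ((fun z => 1 + Complex.I - z) ⁻¹' T) = volume T :=
    (Measure.measurePreserving_sub_left volume _).measure_preimage
      ((Set.toFinite _).isCompact_convexHull (𝕜 := ℝ)).isClosed.measurableSet.nullMeasurableSet
  have : 1 ≤ 2 * volume T := calc
    1 = volume (Complex.measurableEquivRealProd ⁻¹' (Icc (0 : ℝ) 1 ×ˢ Icc (0 : ℝ) 1)) :=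
      volume_preimage_Icc_prod_Icc.symm
    _ ≤ volume T + volume ((fun z => 1 + Complex.I - z) ⁻¹' T) :=
      (measure_mono hsquare).trans (measure_union_le _ _)
    _ = 2 * volume T := by rw [hreflect, two_mul]
  rw [one_div, ENNReal.ofReal_inv_of_pos two_pos, ENNReal.ofReal_ofNat]
  exact (ENNReal.inv_le_iff_le_mul (by simp) (by simp)).2 this

theorem volume_convexHull_triple (p q r : ℂ) :
    volume (convexHull ℝ {p, q, r}) =
      ENNReal.ofReal |ω (q - p) (r - p)| * volume (convexHull ℝ {0, 1, Complex.I}) := by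
  set L := Complex.basisOneI.constr ℝ ![q - p, r - p]
  have hL : L '' {0, 1, Complex.I} = {0, q - p, r - p} := by
    simp [L, image_insert_eq]
  have hhull : convexHull ℝ {p, q, r} = p +ᵥ L '' convexHull ℝ {0, 1, Complex.I} := by
    rw [LinearMap.image_convexHull, hL, ← convexHull_vadd]
    simp [vadd_set_insert]
  rw [hhull, measure_vadd, Measure.addHaar_image_linearMap, det_basisOneI_constr]

theorem le_volume_convexHull_triple (p q r : ℂ) :
    ENNReal.ofReal (|ω (q - p) (r - p)| / 2) ≤ volume (convexHull ℝ {p, q, r}) := by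
  rw [volume_convexHull_triple, div_eq_mul_one_div,
    ENNReal.ofReal_mul (abs_nonneg _)]
  gcongr
  exact half_le_volume_convexHull_zero_one_I

variable {K : Set ℂ}

theorem le_volume_of_opposite_sides (hK : Convex ℝ K) {a u b c : ℂ} (ha : a ∈ K)
    (hau : a + u ∈ K) (hb : b ∈ K) (hc : c ∈ K) (hb₀ : 0 ≤ ω u (b - a))
    (hc₀ : ω u (c - a) ≤ 0) :
    ENNReal.ofReal ((ω u (b - a) - ω u (c - a)) / 2) ≤ volume K := by
  rcases eq_or_ne u 0 with rfl | hu
  · simp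
  set T₁ := convexHull ℝ {a, a + u, b}
  set T₂ := convexHull ℝ {a, a + u, c}
  have hT₁K : T₁ ⊆ K := convexHull_min (by simp [insert_subset_iff, *]) hK
  have hT₂K : T₂ ⊆ K := convexHull_min (by simp [insert_subset_iff, *]) hK
  have hωau : ω u (a + u) = ω u a := by
    rw [map_add, Orientation.areaForm_apply_self, add_zero]
  have hT₁ : T₁ ⊆ {z | ω u a ≤ ω u z} := by
    refine convexHull_min ?_ (convex_halfSpace_ge (ω u).isLinear _)
    simp only [insert_subset_iff, singleton_subset_iff, mem_ofPred_eq, hωau, le_refl, true_and]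
    linarith [map_sub (ω u) b a]
  have hT₂ : T₂ ⊆ {z | ω u z ≤ ω u a} := by
    refine convexHull_min ?_ (convex_halfSpace_le (ω u).isLinear _)
    simp only [insert_subset_iff, singleton_subset_iff, mem_ofPred_eq, hωau, le_refl, true_and]
    linarith [map_sub (ω u) c a]
  have hinter : volume (T₁ ∩ T₂) = 0 := by
    refine measure_mono_null (fun z hz => ?_) (volume_setOf_areaForm_eq hu a)
    exact le_antisymm (hT₂ hz.2) (hT₁ hz.1)
  have hT₂meas : MeasurableSet T₂ :=
    ((Set.toFinite _).isCompact_convexHull (𝕜 := ℝ)).isClosed.measurableSet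
  calc ENNReal.ofReal ((ω u (b - a) - ω u (c - a)) / 2)
      = ENNReal.ofReal (|ω u (b - a)| / 2) + ENNReal.ofReal (|ω u (c - a)| / 2) := by
        rw [abs_of_nonneg hb₀, abs_of_nonpos hc₀, ← ENNReal.ofReal_add (by positivity)
          (by linarith)]
        ring_nf
    _ ≤ volume T₁ + volume T₂ := by
        gcongr <;> simpa using le_volume_convexHull_triple a (a + u) _
    _ = volume (T₁ ∪ T₂) := by rw [← measure_union_add_inter _ hT₂meas, hinter, add_zero]
    _ ≤ volume K := measure_mono (union_subset hT₁K hT₂K)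

theorem le_volume_of_mem (hK : Convex ℝ K) {a u b v : ℂ} (ha : a ∈ K) (hau : a + u ∈ K)
    (hb : b ∈ K) (hbv : b + v ∈ K) :
    ENNReal.ofReal (|ω u v| / 2) ≤ volume K := by
  have hv : ω u v = ω u (b + v - a) - ω u (b - a) := by
    rw [← map_sub]; congr 1; ring
  have h₀ : ω u (a - a) = 0 := by rw [sub_self, map_zero]
  have key : ∀ {x y}, x ∈ K → y ∈ K → 0 ≤ ω u (x - a) → ω u (y - a) ≤ 0 →
      |ω u v| ≤ ω u (x - a) - ω u (y - a) → ENNReal.ofReal (|ω u v| / 2) ≤ volume K :=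
    fun hx hy hx₀ hy₀ hle =>
      (ENNReal.ofReal_le_ofReal (by linarith)).trans
        (le_volume_of_opposite_sides hK ha hau hx hy hx₀ hy₀)
  -- among `a`, `b`, `b + v`, pick two on opposite sides of the line through `a` and `a + u`
  rcases le_total 0 (ω u (b - a)) with hs | hs <;>
    rcases le_total 0 (ω u (b + v - a)) with ht | ht <;>
    rcases le_total (ω u (b - a)) (ω u (b + v - a)) with hst | hst
  · exact key hbv ha ht h₀.le (by rw [hv, abs_le, h₀]; constructor <;> linarith)
  · exact key hb ha hs h₀.le (by rw [hv, abs_le, h₀]; constructor <;> linarith)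
  · exact key hb hbv hs ht (by rw [hv, abs_le]; constructor <;> linarith)
  · exact key hb hbv hs ht (by rw [hv, abs_le]; constructor <;> linarith)
  · exact key hbv hb ht hs (by rw [hv, abs_le]; constructor <;> linarith)
  · exact key hbv hb ht hs (by rw [hv, abs_le]; constructor <;> linarith)
  · exact key ha hb h₀.ge hs (by rw [hv, abs_le, h₀]; constructor <;> linarith)
  · exact key ha hbv h₀.ge ht (by rw [hv, abs_le, h₀]; constructor <;> linarith)

def ContainsUnitSegment (K : Set ℂ) (θ : ℝ) : Prop :=
  ∃ w : ℂ, segment ℝ w (w + Complex.exp (θ * Complex.I)) ⊆ K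

theorem containsUnitSegment_of_segment_sub {θ : ℝ} {v : ℂ}
    (h : segment ℝ v (v - Complex.exp (θ * Complex.I)) ⊆ K) : ContainsUnitSegment K θ :=
  ⟨v - Complex.exp (θ * Complex.I), by rwa [segment_symm, sub_add_cancel]⟩

theorem I_mul_exp_ofReal_mul_I (θ : ℝ) :
    Complex.I * Complex.exp (θ * Complex.I) = Complex.exp ((θ + π / 2 : ℝ) * Complex.I) := by
  rw [Complex.ofReal_add, add_mul, Complex.exp_add, Complex.ofReal_div, Complex.ofReal_ofNat,
    Complex.exp_pi_div_two_mul_I, mul_comm]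

theorem _root_.IsG4SegCover.containsUnitSegment (hc : IsG4SegCover K) (θ : ℝ) :
    ContainsUnitSegment K θ ∨ ContainsUnitSegment K (θ + π / 2) := by
  obtain ⟨j, v, hv⟩ := hc _ (Complex.norm_exp_ofReal_mul_I θ)
  have hrot := I_mul_exp_ofReal_mul_I θ
  fin_cases j <;> simp only [pow_zero, pow_one, one_mul] at hv
  · exact .inl ⟨v, hv⟩
  · exact .inr ⟨v, hrot ▸ hv⟩
  · refine .inl (containsUnitSegment_of_segment_sub (v := v) ?_)
    rwa [Complex.I_sq, neg_one_mul, ← sub_eq_add_neg] at hv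
  · refine .inr (containsUnitSegment_of_segment_sub (v := v) ?_)
    rwa [pow_succ, Complex.I_sq, neg_one_mul, neg_mul, hrot, ← sub_eq_add_neg] at hv

theorem ContainsUnitSegment.le_volume (hK : Convex ℝ K) {φ₁ φ₂ : ℝ}
    (h₁ : ContainsUnitSegment K φ₁) (h₂ : ContainsUnitSegment K φ₂) :
    ENNReal.ofReal (|sin (φ₂ - φ₁)| / 2) ≤ volume K := by
  obtain ⟨w₁, hw₁⟩ := h₁
  obtain ⟨w₂, hw₂⟩ := h₂
  have := le_volume_of_mem hK (hw₁ (left_mem_segment ℝ _ _)) (hw₁ (right_mem_segment ℝ _ _))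
    (hw₂ (left_mem_segment ℝ _ _)) (hw₂ (right_mem_segment ℝ _ _))
  convert this using 4
  simp only [Complex.areaForm, Complex.mul_im, Complex.conj_re, Complex.conj_im,
    Complex.exp_ofReal_mul_I_re, Complex.exp_ofReal_mul_I_im, sin_sub]
  ring

theorem half_le_volume_of_iff (hK : Convex ℝ K) (hc : IsG4SegCover K)
    (h : ContainsUnitSegment K 0 ↔ ContainsUnitSegment K (π / 2)) :
    ENNReal.ofReal (1 / 2) ≤ volume K := by
  have hsin : |sin (π / 2)| = 1 := by rw [sin_pi_div_two, abs_one]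
  by_cases h₀ : ContainsUnitSegment K 0
  · simpa [hsin] using h₀.le_volume hK (h.1 h₀)
  · have h₁ := (hc.containsUnitSegment 0).resolve_left h₀
    have h₂ := (hc.containsUnitSegment (π / 2)).resolve_left (mt h.2 h₀)
    simpa [hsin] using h₁.le_volume hK h₂

theorem cos_le_volume_of_not_iff (hK : Convex ℝ K) (hc : IsG4SegCover K) {φ h : ℝ}
    (hφ : ¬(ContainsUnitSegment K φ ↔ ContainsUnitSegment K (φ + h))) :
    ENNReal.ofReal (|cos h| / 2) ≤ volume K := by
  by_cases h₀ : ContainsUnitSegment K φ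
  · have h₁ := (hc.containsUnitSegment (φ + h)).resolve_left fun h₁ => hφ (iff_of_true h₀ h₁)
    convert h₀.le_volume hK h₁ using 3
    rw [show φ + h + π / 2 - φ = h + π / 2 by ring, sin_add_pi_div_two]
  · have h₁ := (hc.containsUnitSegment φ).resolve_left h₀
    have h₂ : ContainsUnitSegment K (φ + h) := by tauto
    convert h₁.le_volume hK h₂ using 3
    rw [show φ + h - (φ + π / 2) = h - π / 2 by ring, sin_sub_pi_div_two, abs_neg]

theorem exists_lt_not_iff_succ {p : ℕ → Prop} {n : ℕ} (h : ¬(p 0 ↔ p n)) :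
    ∃ j < n, ¬(p j ↔ p (j + 1)) := by
  contrapose! h
  induction n with
  | zero => rfl
  | succ n ih => exact (ih fun j hj => h j (hj.trans n.lt_succ_self)).trans (h n n.lt_succ_self)

theorem cos_le_volume (hK : Convex ℝ K) (hc : IsG4SegCover K) {h : ℝ} {m : ℕ}
    (hmh : m * h = π / 2) : ENNReal.ofReal (|cos h| / 2) ≤ volume K := by
  by_cases hend : ContainsUnitSegment K 0 ↔ ContainsUnitSegment K (π / 2)
  · refine (ENNReal.ofReal_le_ofReal ?_).trans (half_le_volume_of_iff hK hc hend)
    linarith [abs_cos_le_one h]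
  · obtain ⟨j, -, hj⟩ := exists_lt_not_iff_succ (n := m)
      (p := fun k : ℕ => ContainsUnitSegment K (k * h))
      (by simp only [Nat.cast_zero, zero_mul, hmh]; exact hend)
    refine cos_le_volume_of_not_iff hK hc (φ := j * h) ?_
    rwa [Nat.cast_succ, add_one_mul] at hj

theorem _root_.IsG4SegCover.half_le_volume (hc : IsG4SegCover K) (hK : Convex ℝ K) :
    ENNReal.ofReal (1 / 2) ≤ volume K := by
  have hlim : Filter.Tendsto (fun n : ℕ => ENNReal.ofReal (|cos (π / 2 / n)| / 2)) Filter.atTop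
      (nhds (ENNReal.ofReal (1 / 2))) := by
    have := ((continuous_abs.comp continuous_cos).tendsto 0).comp
      (tendsto_const_div_atTop_nhds_zero_nat (π / 2))
    simpa using ENNReal.tendsto_ofReal (this.div_const 2)
  refine le_of_tendsto hlim ((Filter.eventually_ne_atTop 0).mono fun n hn => ?_)
  exact cos_le_volume hK hc (m := n) (by field_simp)

theorem exists_I_pow_mul_re_nonpos_im_nonneg (u : ℂ) :
    ∃ j : Fin 4, (Complex.I ^ (j : ℕ) * u).re ≤ 0 ∧ 0 ≤ (Complex.I ^ (j : ℕ) * u).im := by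
  rcases le_total u.re 0 with hre | hre <;> rcases le_total u.im 0 with him | him
  · exact ⟨3, by simpa [pow_succ] using ⟨him, hre⟩⟩
  · exact ⟨0, by simpa using ⟨hre, him⟩⟩
  · exact ⟨2, by simpa [pow_succ] using ⟨hre, him⟩⟩
  · exact ⟨1, by simpa using ⟨him, hre⟩⟩

theorem segment_subset_convexHull_zero_one_I {w : ℂ} (hw : ‖w‖ ≤ 1) (hre : w.re ≤ 0)
    (him : 0 ≤ w.im) : segment ℝ (-w.re : ℂ) (-w.re + w) ⊆ convexHull ℝ {0, 1, Complex.I} := by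
  have hre' : -w.re ≤ 1 := (neg_le_abs _).trans ((Complex.abs_re_le_norm w).trans hw)
  have him' := (Complex.im_le_norm w).trans hw
  refine (convex_convexHull ℝ _).segment_subset ?_ ?_
  · exact mem_convexHull_zero_one_I (by simpa) (by simp) (by simpa using hre')
  · exact mem_convexHull_zero_one_I (by simp) (by simpa) (by simpa)

theorem isG4SegCover_convexHull_zero_one_I : IsG4SegCover (convexHull ℝ {0, 1, Complex.I}) := by
  intro u hu
  obtain ⟨j, hre, him⟩ := exists_I_pow_mul_re_nonpos_im_nonneg u
  exact ⟨j, _, segment_subset_convexHull_zero_one_I (by simp [hu]) hre him⟩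

end G4Cover

open G4Cover in
theorem G4_covering_unit_segments :
    IsG4SegCover (convexHull ℝ {(0 : ℂ), 1, Complex.I}) ∧
    (∀ K : Set ℂ, Convex ℝ K → IsG4SegCover K →
      ENNReal.ofReal (1 / 2) ≤ volume K) :=
  ⟨isG4SegCover_convexHull_zero_one_I, fun _ hK hc => hc.half_le_volume hK⟩
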